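/- Let n ≥ 1, k ≥ 1, d ≥ 0, and h, g ∈ S_n. The number of pairs consisting of a sequence (τ_1,…,τ_d) of transpositions in S_n together with a composition d = d_1 + ⋯ + d_k into k nonnegative parts, such that each of the k consecutive blocks of the sequence (the j-th block having length d_j) is strictly monotone and τ_d ⋯ τ_1 h = g, equals the number of ordered k-tuples (σ_1,…,σ_k) ∈ S_n^k with Σ_{i=1}^k ℓ*(σ_i) = d and σ_k ⋯ σ_1 h = g. -/

import Mathlib

/-- For a transposition `τ = (a b)` with `a < b`, the "second element" `b`,
realized as the largest point moved by `τ`. -/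
def bval {n : ℕ} (τ : Equiv.Perm (Fin n)) : ℕ :=
  τ.support.sup fun x => (x : ℕ)

/-- The colength `ℓ*(σ) = n − c(σ)`, where `c(σ)` is the number of cycles of `σ`
(fixed points counted as cycles of length 1). -/
noncomputable def colength {n : ℕ} (σ : Equiv.Perm (Fin n)) : ℕ :=
  n - (σ.cycleType.card + (n - σ.support.card))

/-!
The last transposition `(a b)` of a strictly monotone sequence with product `π` is determined by
`π`: all earlier transpositions fix every point `≥ b`, so `b` is the largest point moved by `π`
and `a = π b`. Hence such a factorization of `π` is unique, and peeling off `(π b, b)`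
recursively produces one. Each peeling step lowers the colength by one, because `(π b, b) π`
splits `b` off its cycle, so the factorization has length `ℓ*(π)`. A sequence of transpositions
together with a composition of `d` is the same as a `k`-tuple of lists of total length `d`, and
multiplying out each strictly monotone block turns these into the `k`-tuples `(σ_1, …, σ_k)`
with `Σ ℓ*(σ_i) = d`.
-/

open Equiv Equiv.Perm Finset

namespace List

variable {α : Type*}

theorem getElem_splitLengths (l : List α) (sz : List ℕ) (i : ℕ) (hi : i < sz.length) :
    (sz.splitLengths l)[i]'(by simpa using hi) = (l.drop (sz.take i).sum).take sz[i] := by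
  induction sz generalizing l i with
  | nil => simp at hi
  | cons s sz ih =>
    cases i with
    | zero => simp
    | succ i => simpa [drop_drop] using ih (l.drop s) i (by simpa using hi)

theorem splitLengths_map_length_flatten (L : List (List α)) :
    (L.map length).splitLengths L.flatten = L := by
  induction L with
  | nil => rfl
  | cons l L ih => simp [ih]

theorem prod_reverse_append_singleton {M : Type*} [Monoid M] (L : List M) (x : M) :
    (L ++ [x]).reverse.prod = x * L.reverse.prod := by
  simp

theorem prod_reverse_flatten {M : Type*} [Monoid M] (L : List (List M)) :
    L.flatten.reverse.prod = (L.map fun l => l.reverse.prod).reverse.prod := by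
  simp [reverse_flatten, prod_flatten, map_reverse, Function.comp_def]

end List

section Blocks

variable {α : Type*} {d k : ℕ}

def blockStart (c : Fin k → ℕ) (j : Fin k) : ℕ :=
  ∑ i ∈ univ.filter (· < j), c i

def block (v : Fin d → α) (c : Fin k → ℕ) (j : Fin k) : List α :=
  ((List.ofFn v).drop (blockStart c j)).take (c j)

theorem blockStart_eq_sum_take (c : Fin k → ℕ) (j : Fin k) :
    blockStart c j = ((List.ofFn c).take j).sum := by
  rw [List.sum_take_ofFn, blockStart]
  rfl

theorem blockStart_add_le (c : Fin k → ℕ) (j : Fin k) :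
    blockStart c j + c j ≤ ∑ i, c i := by
  rw [blockStart, add_comm, ← sum_insert (by simp)]
  exact sum_le_sum_of_subset (subset_univ _)

variable {v : Fin d → α} {c : Fin k → ℕ}

theorem length_block (hc : ∑ i, c i = d) (j : Fin k) : (block v c j).length = c j := by
  have := blockStart_add_le c j
  simp only [block, List.length_take, List.length_drop, List.length_ofFn]
  omega

theorem getElem_block (j : Fin k) (i : ℕ) (hi : i < (block v c j).length) :
    (block v c j)[i] = v ⟨blockStart c j + i, by
      simp only [block, List.length_take, List.length_drop, List.length_ofFn] at hi; omega⟩ := by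
  simp [block]

theorem ofFn_block (v : Fin d → α) (c : Fin k → ℕ) :
    List.ofFn (block v c) = (List.ofFn c).splitLengths (List.ofFn v) := by
  refine List.ext_getElem (by simp) fun j h₁ _ => ?_
  rw [List.getElem_ofFn, List.getElem_splitLengths _ _ _ (by simpa using h₁), block,
    blockStart_eq_sum_take, List.getElem_ofFn]

theorem flatten_ofFn_block (hc : ∑ i, c i = d) :
    (List.ofFn (block v c)).flatten = List.ofFn v := by
  rw [ofFn_block]
  exact List.flatten_splitLengths _ _ (by simp [List.sum_ofFn, hc])

theorem block_eq_of_ofFn_eq_flatten (B : Fin k → List α)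
    (hv : List.ofFn v = (List.ofFn B).flatten) : block v (fun j => (B j).length) = B := by
  apply List.ofFn_injective
  have hc : List.ofFn (fun j => (B j).length) = (List.ofFn B).map List.length :=
    List.map_ofFn.symm
  rw [ofFn_block, hv, hc, List.splitLengths_map_length_flatten]

theorem forall_apply_iff_forall_mem_block (hc : ∑ i, c i = d) {P : α → Prop} :
    (∀ m, P (v m)) ↔ ∀ j, ∀ x ∈ block v c j, P x := by
  rw [← List.forall_mem_ofFn_iff, ← flatten_ofFn_block hc]
  simp only [List.mem_flatten, List.mem_ofFn]
  exact ⟨fun H j x hx => H x ⟨_, ⟨j, rfl⟩, hx⟩,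
    fun H x ⟨_, ⟨j, hj⟩, hx⟩ => H j x (hj ▸ hx)⟩

theorem pairwise_block_iff (hc : ∑ i, c i = d) {R : α → α → Prop} :
    (∀ j : Fin k, ∀ m m' : Fin d, blockStart c j ≤ m → m < blockStart c j + c j →
      blockStart c j ≤ m' → m' < blockStart c j + c j → m < m' → R (v m) (v m')) ↔
      ∀ j, (block v c j).Pairwise R := by
  simp only [List.pairwise_iff_getElem, getElem_block, length_block hc]
  refine forall_congr' fun j =>
    ⟨fun H i i' hi hi' hii' => ?_, fun H m m' h₁ h₂ h₃ h₄ hmm' => ?_⟩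
  · exact H _ _ (Nat.le_add_right _ _) (Nat.add_lt_add_left hi _) (Nat.le_add_right _ _)
      (Nat.add_lt_add_left hi' _) (Fin.mk_lt_mk.2 (Nat.add_lt_add_left hii' _))
  · have hlt : (m : ℕ) < m' := hmm'
    convert H (m - blockStart c j) (m' - blockStart c j) (by omega) (by omega) (by omega)
      using 2 <;> exact Fin.ext (by simp only; omega)

theorem prod_reverse_ofFn_eq_prod_reverse_blocks [Monoid α] (hc : ∑ i, c i = d) :
    (List.ofFn v).reverse.prod = (List.ofFn fun j => (block v c j).reverse.prod).reverse.prod := by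
  rw [← flatten_ofFn_block hc, List.prod_reverse_flatten, List.map_ofFn]
  rfl

theorem card_compositions_eq_card_blocks (Q : (Fin k → List α) → Prop) :
    Nat.card {p : (Fin d → α) × (Fin k → ℕ) // ∑ j, p.2 j = d ∧ Q (block p.1 p.2)} =
      Nat.card {B : Fin k → List α // ∑ j, (B j).length = d ∧ Q B} := by
  refine Nat.card_eq_of_bijective (fun p => ⟨block p.1.1 p.1.2,
    (sum_congr rfl fun j _ => length_block p.2.1 j).trans p.2.1, p.2.2⟩) ⟨?_, ?_⟩
  · rintro ⟨⟨v, c⟩, hc, _⟩ ⟨⟨v', c'⟩, hc', _⟩ h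
    simp only [Subtype.mk.injEq] at h
    have hv : v = v' := List.ofFn_injective <| by
      rw [← flatten_ofFn_block hc, h, flatten_ofFn_block hc']
    have hcc : c = c' := funext fun j =>
      (length_block (v := v) hc j).symm.trans (h ▸ length_block hc' j)
    simp [hv, hcc]
  · rintro ⟨B, hB, hQ⟩
    have hlen : (List.ofFn B).flatten.length = d := by simp [List.sum_ofFn, hB]
    let v : Fin d → α := fun m => (List.ofFn B).flatten[m.1]
    have hv : List.ofFn v = (List.ofFn B).flatten :=
      List.ext_getElem (by simp [hlen]) fun i _ _ => by simp [v]
    refine ⟨⟨(v, fun j => (B j).length), hB, ?_⟩, ?_⟩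
    · rwa [block_eq_of_ofFn_eq_flatten B hv]
    · simp only [block_eq_of_ofFn_eq_flatten B hv]

end Blocks

section Colength

variable {n : ℕ}

theorem colength_add_card_cycleType (σ : Perm (Fin n)) :
    colength σ + σ.cycleType.card = #σ.support := by
  have hcard : σ.cycleType.card ≤ #σ.support := by
    rw [← sum_cycleType]
    simpa using Multiset.card_nsmul_le_sum (s := σ.cycleType) (a := 1)
      fun m hm => one_le_two.trans (two_le_of_mem_cycleType hm)
  have hsupp : #σ.support ≤ n := by simpa using card_le_univ σ.support
  unfold colength
  omega

theorem colength_one : colength (1 : Perm (Fin n)) = 0 := by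
  simp [colength]

theorem Equiv.Perm.Disjoint.colength_mul {σ τ : Perm (Fin n)} (h : σ.Disjoint τ) :
    colength (σ * τ) = colength σ + colength τ := by
  have hστ := colength_add_card_cycleType (σ * τ)
  rw [h.cycleType_mul, Multiset.card_add, h.card_support_mul] at hστ
  have hσ := colength_add_card_cycleType σ
  have hτ := colength_add_card_cycleType τ
  omega

theorem Equiv.Perm.IsCycle.colength_add_one {σ : Perm (Fin n)} (hσ : σ.IsCycle) :
    colength σ + 1 = #σ.support := by
  simpa [hσ.cycleType] using colength_add_card_cycleType σ

theorem Equiv.Perm.IsCycle.colength_swap_mul_add_one {σ : Perm (Fin n)} (hσ : σ.IsCycle)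
    {b : Fin n} (hb : σ b ≠ b) : colength (swap b (σ b) * σ) + 1 = colength σ := by
  have hσ_add_one := hσ.colength_add_one
  by_cases hσσb : σ (σ b) = b
  · have hσ_eq : σ = swap b (σ b) := hσ.eq_swap_of_apply_apply_eq_self hb hσσb
    have hone : swap b (σ b) * σ = 1 := by
      conv_lhs => arg 2; rw [hσ_eq]
      exact swap_mul_self b (σ b)
    have htwo : #σ.support = 2 := by
      rw [hσ_eq]
      exact card_support_swap hb.symm
    rw [hone, colength_one]
    omega
  · have hsupp : #(swap b (σ b) * σ).support + 1 = #σ.support := by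
      rw [support_swap_mul_eq σ b hσσb, sdiff_singleton_eq_erase]
      exact card_erase_add_one (mem_support.2 hb)
    have := (hσ.swap_mul hb hσσb).colength_add_one
    omega

/-- Only the cycle `C` of `σ` through `b` changes: `σ = R * C` with `R` disjoint from `C`, and
`swap b (σ b)` commutes with `R`. -/
theorem colength_swap_mul_add_one {σ : Perm (Fin n)} {b : Fin n} (hb : σ b ≠ b) :
    colength (swap b (σ b) * σ) + 1 = colength σ := by
  set C := σ.cycleOf b
  set R := σ * C⁻¹
  have hCb : C b = σ b := cycleOf_apply_self σ b
  have hbC : C b ≠ b := hCb ▸ hb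
  have hRC : R.Disjoint C := disjoint_mul_inv_of_mem_cycleFactorsFinset
    (cycleOf_mem_cycleFactorsFinset_iff.2 (mem_support.2 hb))
  have hRb : R b = b := (hRC b).resolve_right hbC
  have hRσb : R (σ b) = σ b := (hRC (σ b)).resolve_right fun h => hb (C.injective (hCb ▸ h))
  have hσ : σ = R * C := by simp [R]
  have hσ' : swap b (σ b) * σ = R * (swap b (C b) * C) :=
    calc swap b (σ b) * σ = swap b (σ b) * R * C := by rw [mul_assoc, ← hσ]
      _ = R * swap b (σ b) * C := by rw [mul_swap_eq_swap_mul, hRb, hRσb]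
      _ = R * (swap b (C b) * C) := by rw [hCb, mul_assoc]
  have hRD : R.Disjoint (swap b (C b) * C) := by
    refine hRC.mono subset_rfl fun x hx => ?_
    rcases mem_union.1 (support_mul_le _ _ hx) with hx | hx
    · rw [support_swap hbC.symm, mem_insert, mem_singleton] at hx
      rcases hx with rfl | rfl
      · exact mem_support.2 hbC
      · exact apply_mem_support.2 (mem_support.2 hbC)
    · exact hx
  rw [hσ', hRD.colength_mul, hσ, hRC.colength_mul,
    ← (isCycle_cycleOf σ hb).colength_swap_mul_add_one hbC, add_assoc]

end Colength

section StrictMonoSwaps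

variable {n : ℕ}

def StrictMonoSwaps (L : List (Perm (Fin n))) : Prop :=
  (∀ τ ∈ L, τ.IsSwap) ∧ L.Pairwise fun τ τ' => bval τ < bval τ'

theorem bval_swap {a b : Fin n} (hab : a < b) : bval (swap a b) = b := by
  rw [bval, support_swap hab.ne, sup_insert, sup_singleton]
  exact max_eq_right (Fin.le_iff_val_le_val.1 hab.le)

theorem Equiv.Perm.IsSwap.exists_lt_eq_swap {α : Type*} [LinearOrder α] {τ : Perm α}
    (h : τ.IsSwap) : ∃ a b, a < b ∧ τ = swap a b := by
  obtain ⟨x, y, hxy, rfl⟩ := h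
  rcases hxy.lt_or_gt with hlt | hlt
  · exact ⟨x, y, hlt, rfl⟩
  · exact ⟨y, x, hlt, swap_comm x y⟩

theorem prod_apply_eq_self_of_forall_bval_lt {L : List (Perm (Fin n))} {x : Fin n}
    (h : ∀ τ ∈ L, bval τ < x) : L.prod x = x := by
  induction L with
  | nil => rfl
  | cons τ L ih =>
    rw [List.prod_cons, mul_apply, ih fun τ' hτ' => h τ' (List.mem_cons_of_mem _ hτ')]
    exact notMem_support.1 fun hx => (h τ List.mem_cons_self).not_ge (le_sup hx)

theorem swap_mul_prod_reverse_apply_right {L : List (Perm (Fin n))} (a : Fin n) {b : Fin n}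
    (hL : ∀ τ ∈ L, bval τ < b) : (swap a b * L.reverse.prod) b = a := by
  rw [mul_apply, prod_apply_eq_self_of_forall_bval_lt fun τ hτ => hL τ (List.mem_reverse.1 hτ),
    swap_apply_right]

theorem swap_mul_prod_reverse_apply_of_lt {L : List (Perm (Fin n))} {a b x : Fin n} (hab : a < b)
    (hL : ∀ τ ∈ L, bval τ < b) (hx : b < x) : (swap a b * L.reverse.prod) x = x := by
  rw [mul_apply, prod_apply_eq_self_of_forall_bval_lt fun τ hτ =>
      (hL τ (List.mem_reverse.1 hτ)).trans hx,
    swap_apply_of_ne_of_ne (hab.trans hx).ne' hx.ne']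

theorem strictMonoSwaps_nil : StrictMonoSwaps ([] : List (Perm (Fin n))) :=
  ⟨by simp, .nil⟩

theorem strictMonoSwaps_append_swap_iff {L : List (Perm (Fin n))} {a b : Fin n} (hab : a < b) :
    StrictMonoSwaps (L ++ [swap a b]) ↔ StrictMonoSwaps L ∧ ∀ τ ∈ L, bval τ < b := by
  simp only [StrictMonoSwaps, List.mem_append, List.mem_singleton, List.pairwise_append,
    List.pairwise_singleton, forall_eq, bval_swap hab, or_imp, forall_and, true_and]
  exact ⟨fun h => ⟨⟨h.1.1, h.2.1⟩, h.2.2⟩,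
    fun h => ⟨⟨h.1.1, ⟨a, b, hab.ne, rfl⟩⟩, h.1.2, h.2⟩⟩

@[elab_as_elim]
theorem StrictMonoSwaps.induction {motive : ∀ L : List (Perm (Fin n)), StrictMonoSwaps L → Prop}
    (nil : motive [] strictMonoSwaps_nil)
    (append_swap : ∀ M (a b : Fin n) (hab : a < b) (hM : StrictMonoSwaps M)
      (hMb : ∀ τ ∈ M, bval τ < b), motive M hM →
        motive (M ++ [swap a b]) ((strictMonoSwaps_append_swap_iff hab).2 ⟨hM, hMb⟩))
    {L : List (Perm (Fin n))} (hL : StrictMonoSwaps L) : motive L hL := by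
  induction L using List.reverseRecOn with
  | nil => exact nil
  | append_singleton M τ ih =>
    obtain ⟨a, b, hab, rfl⟩ := (hL.1 τ (by simp)).exists_lt_eq_swap
    obtain ⟨hM, hMb⟩ := (strictMonoSwaps_append_swap_iff hab).1 hL
    exact append_swap M a b hab hM hMb (ih hM)

theorem StrictMonoSwaps.bval_lt_of_forall_le_apply_eq_self {L : List (Perm (Fin n))}
    (hL : StrictMonoSwaps L) {b : Fin n} (hfix : ∀ x, b ≤ x → L.reverse.prod x = x) :
    ∀ τ ∈ L, bval τ < b := by
  cases hL using StrictMonoSwaps.induction with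
  | nil => simp
  | append_swap M a' b' hab' _ hMb' =>
    rw [List.prod_reverse_append_singleton] at hfix
    have hb' : b' < b := not_le.1 fun hle =>
      hab'.ne ((swap_mul_prod_reverse_apply_right a' hMb').symm.trans (hfix b' hle))
    intro τ hτ
    rcases List.mem_append.1 hτ with hτ | hτ
    · exact (hMb' τ hτ).trans hb'
    · rw [List.mem_singleton.1 hτ, bval_swap hab']
      exact hb'

theorem StrictMonoSwaps.eq_of_prod_reverse_eq {L L' : List (Perm (Fin n))}
    (hL : StrictMonoSwaps L) (hL' : StrictMonoSwaps L') (h : L.reverse.prod = L'.reverse.prod) :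
    L = L' := by
  induction hL using StrictMonoSwaps.induction generalizing L' with
  | nil =>
    cases hL' using StrictMonoSwaps.induction with
    | nil => rfl
    | append_swap M' a' b' hab' _ hM'b' =>
      rw [List.prod_reverse_append_singleton] at h
      refine absurd (swap_mul_prod_reverse_apply_right a' hM'b') ?_
      simpa [← h] using hab'.ne'
  | append_swap M a b hab hM hMb ih =>
    cases hL' using StrictMonoSwaps.induction with
    | nil =>
      rw [List.prod_reverse_append_singleton] at h
      refine absurd (swap_mul_prod_reverse_apply_right a hMb) ?_
      simpa [h] using hab.ne'
    | append_swap M' a' b' hab' hM' hM'b' =>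
      rw [List.prod_reverse_append_singleton, List.prod_reverse_append_singleton] at h
      have hbb' : b = b' := le_antisymm
        (not_lt.1 fun hlt => hab.ne (by
          rw [← swap_mul_prod_reverse_apply_right a hMb, h,
            swap_mul_prod_reverse_apply_of_lt hab' hM'b' hlt]))
        (not_lt.1 fun hlt => hab'.ne (by
          rw [← swap_mul_prod_reverse_apply_right a' hM'b', ← h,
            swap_mul_prod_reverse_apply_of_lt hab hMb hlt]))
      subst hbb'
      have haa' : a = a' := by
        rw [← swap_mul_prod_reverse_apply_right a hMb, h,
          swap_mul_prod_reverse_apply_right a' hM'b']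
      subst haa'
      rw [ih hM' (mul_left_cancel h)]

theorem StrictMonoSwaps.colength_prod_reverse {L : List (Perm (Fin n))}
    (hL : StrictMonoSwaps L) : colength L.reverse.prod = L.length := by
  induction hL using StrictMonoSwaps.induction with
  | nil => exact colength_one
  | append_swap M a b hab _ hMb ih =>
    have hπb := swap_mul_prod_reverse_apply_right a hMb
    have hπ := colength_swap_mul_add_one (hπb.trans_ne hab.ne)
    rw [hπb, swap_comm b a, swap_mul_self_mul, ih] at hπ
    rw [List.prod_reverse_append_singleton, List.length_append, List.length_singleton, ← hπ]

theorem exists_strictMonoSwaps_prod_reverse_eq (σ : Perm (Fin n)) :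
    ∃ L, StrictMonoSwaps L ∧ L.reverse.prod = σ := by
  induction hσ : #σ.support using Nat.strong_induction_on generalizing σ with
  | _ m ih =>
  subst hσ
  by_cases h1 : σ = 1
  · exact ⟨[], strictMonoSwaps_nil, h1.symm⟩
  have hne : σ.support.Nonempty := nonempty_iff_ne_empty.2 (support_eq_empty_iff.not.2 h1)
  set b := σ.support.max' hne
  have hb : σ b ≠ b := mem_support.1 (max'_mem _ _)
  have hab : σ b < b := (le_max' _ _ (apply_mem_support.2 (max'_mem _ _))).lt_of_ne hb
  have hfix : ∀ x, b ≤ x → (swap b (σ b) * σ) x = x := by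
    intro x hx
    rcases hx.eq_or_lt with rfl | hlt
    · simp
    · rw [mul_apply, notMem_support.1 fun hx => (le_max' _ x hx).not_gt hlt,
        swap_apply_of_ne_of_ne hlt.ne' (hab.trans hlt).ne']
  obtain ⟨L, hL, hLσ⟩ := ih _ (card_support_swap_mul hb) _ rfl
  refine ⟨L ++ [swap (σ b) b], (strictMonoSwaps_append_swap_iff hab).2
    ⟨hL, hL.bval_lt_of_forall_le_apply_eq_self (hLσ ▸ hfix)⟩, ?_⟩
  simp [hLσ, swap_comm (σ b) b]

theorem card_strictMonoSwaps_blocks_eq {k : ℕ} (d : ℕ) (R : (Fin k → Perm (Fin n)) → Prop) :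
    Nat.card {B : Fin k → List (Perm (Fin n)) // ∑ j, (B j).length = d ∧
        (∀ j, StrictMonoSwaps (B j)) ∧ R fun j => (B j).reverse.prod} =
      Nat.card {σ : Fin k → Perm (Fin n) // ∑ j, colength (σ j) = d ∧ R σ} := by
  refine Nat.card_eq_of_bijective
    (fun B => ⟨fun j => (B.1 j).reverse.prod, ?_, B.2.2.2⟩) ⟨?_, ?_⟩
  · simpa only [(B.2.2.1 _).colength_prod_reverse] using B.2.1
  · rintro ⟨B, _, hB, _⟩ ⟨B', _, hB', _⟩ h
    simp only [Subtype.mk.injEq] at h ⊢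
    exact funext fun j => (hB j).eq_of_prod_reverse_eq (hB' j) (congrFun h j)
  · rintro ⟨σ, hσ, hR⟩
    choose L hL hLσ using fun j => exists_strictMonoSwaps_prod_reverse_eq (σ j)
    have hσL : (fun j => (L j).reverse.prod) = σ := funext hLσ
    refine ⟨⟨L, ?_, hL, hσL ▸ hR⟩, Subtype.ext hσL⟩
    simpa only [← (hL _).colength_prod_reverse, hLσ] using hσ

end StrictMonoSwaps

theorem multimonotone_path_count_eq_factorization_count_general (n k d : ℕ)
    (h g : Equiv.Perm (Fin n)) :
    Nat.card {p : (Fin d → Equiv.Perm (Fin n)) × (Fin k → ℕ) //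
        (∑ j, p.2 j) = d ∧
        (∀ m, (p.1 m).IsSwap) ∧
        (∀ j : Fin k, ∀ m m' : Fin d,
          (∑ j' ∈ Finset.univ.filter (· < j), p.2 j') ≤ (m : ℕ) →
          (m : ℕ) < (∑ j' ∈ Finset.univ.filter (· < j), p.2 j') + p.2 j →
          (∑ j' ∈ Finset.univ.filter (· < j), p.2 j') ≤ (m' : ℕ) →
          (m' : ℕ) < (∑ j' ∈ Finset.univ.filter (· < j), p.2 j') + p.2 j →
          m < m' → bval (p.1 m) < bval (p.1 m')) ∧
        (List.ofFn p.1).reverse.prod * h = g} =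
      Nat.card {σ : Fin k → Equiv.Perm (Fin n) //
        (∑ i, colength (σ i)) = d ∧
        (List.ofFn σ).reverse.prod * h = g} := by
  rw [← card_strictMonoSwaps_blocks_eq d fun σ => (List.ofFn σ).reverse.prod * h = g,
    ← card_compositions_eq_card_blocks]
  refine Nat.card_congr (Equiv.subtypeEquivRight fun p => and_congr_right fun hc => ?_)
  rw [prod_reverse_ofFn_eq_prod_reverse_blocks hc]
  simp only [StrictMonoSwaps, forall_and, and_assoc]
  exact (forall_apply_iff_forall_mem_block hc).and
    ((pairwise_block_iff (v := p.1) (R := fun τ τ' => bval τ < bval τ') hc).and Iff.rfl)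

/-- the number of pairs (a sequence of `d` transpositions, a composition
`d = d_1 + ⋯ + d_k`) such that each of the `k` consecutive blocks (the `j`-th of length
`d_j`) is strictly monotone and `τ_d ⋯ τ_1 h = g`, equals the number of `k`-tuples
`(σ_1,…,σ_k)` with `Σ_i ℓ*(σ_i) = d` and `σ_k ⋯ σ_1 h = g`. -/
theorem multimonotone_path_count_eq_factorization_count (n k d : ℕ) (hn : 1 ≤ n)
    (hk : 1 ≤ k) (h g : Equiv.Perm (Fin n)) :
    Nat.card {p : (Fin d → Equiv.Perm (Fin n)) × (Fin k → ℕ) //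
        (∑ j, p.2 j) = d ∧
        (∀ m, (p.1 m).IsSwap) ∧
        (∀ j : Fin k, ∀ m m' : Fin d,
          (∑ j' ∈ Finset.univ.filter (· < j), p.2 j') ≤ (m : ℕ) →
          (m : ℕ) < (∑ j' ∈ Finset.univ.filter (· < j), p.2 j') + p.2 j →
          (∑ j' ∈ Finset.univ.filter (· < j), p.2 j') ≤ (m' : ℕ) →
          (m' : ℕ) < (∑ j' ∈ Finset.univ.filter (· < j), p.2 j') + p.2 j →
          m < m' → bval (p.1 m) < bval (p.1 m')) ∧
        (List.ofFn p.1).reverse.prod * h = g} =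
      Nat.card {σ : Fin k → Equiv.Perm (Fin n) //
        (∑ i, colength (σ i)) = d ∧
        (List.ofFn σ).reverse.prod * h = g} :=
  multimonotone_path_count_eq_factorization_count_general n k d h g
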